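/- Let τ ∈ ℂ with Im τ > 0 and let x, y ∈ ℂ. Then A†(x,y|τ)³ − C†(x,y|τ)³ = exp(2iπτ)·exp(4ix+2iy)·( A†(x+πτ, y|τ)³ − C†(x+πτ, y|τ)³ ). -/

import Mathlib

open Complex

/-- The theta series A†(x,y|τ). -/
noncomputable def Adag (x y τ : ℂ) : ℂ :=
  ∑' m : ℤ, ∑' n : ℤ,
    Complex.exp (2 * Complex.I * Real.pi * τ * ((m : ℂ) ^ 2 + (m : ℂ) * (n : ℂ) + (n : ℂ) ^ 2)) *
    Complex.exp (2 * Complex.I * ((m : ℂ) + (n : ℂ)) * x) *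
    Complex.exp (2 * Complex.I * (n : ℂ) * y)

/-- The theta series C†(x,y|τ), with `ω = exp(2πi/3)`. -/
noncomputable def Cdag (x y τ : ℂ) : ℂ :=
  ∑' m : ℤ, ∑' n : ℤ,
    Complex.exp (2 * Real.pi * Complex.I / 3) ^ (m - n) *
    Complex.exp (2 * Complex.I * Real.pi * τ * ((m : ℂ) ^ 2 + (m : ℂ) * (n : ℂ) + (n : ℂ) ^ 2)) *
    Complex.exp (2 * Complex.I * ((m : ℂ) + (n : ℂ)) * x) *
    Complex.exp (2 * Complex.I * (n : ℂ) * y)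

/-!
Expanding the cubes, `A†³` is a sum over triples `t` of lattice points, and `C†³` is the same sum
with the triple `t` weighted by `ω ^ s(t)`, where `s = Σ m - Σ n`; so only triples with
`s ≢ 0 (mod 3)` contribute to `A†³ - C†³`. On those triples, a rotation of the hexagonal lattice
followed by a common translation lowers `Σ m` and `Σ n` by one and the quadratic form
`Σ (m² + m n + n²)` by `Σ m + Σ n - 1`, which is exactly the effect of `x ↦ x + π τ` on the
summand, up to the factor `exp (2 i π τ) exp (4 i x + 2 i y)`.
-/

open scoped Real

theorem tsum_pow_three_of_summable_norm {ι R : Type*} [NormedRing R] [CompleteSpace R]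
    {f : ι → R} (hf : Summable fun i => ‖f i‖) :
    (∑' i, f i) ^ 3 = ∑' t : ι × ι × ι, f t.1 * (f t.2.1 * f t.2.2) := by
  rw [pow_three, tsum_mul_tsum_of_summable_norm hf hf,
    tsum_mul_tsum_of_summable_norm hf (hf.mul_norm hf)]

theorem Summable.mul_mul_norm {ι R : Type*} [NormedRing R] {f : ι → R}
    (hf : Summable fun i => ‖f i‖) :
    Summable fun t : ι × ι × ι => ‖f t.1 * (f t.2.1 * f t.2.2)‖ :=
  hf.mul_norm (g := fun q : ι × ι => f q.1 * f q.2) (hf.mul_norm hf)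

lemma Cdag_eq_Adag (x y τ : ℂ) : Cdag x y τ = Adag (x + π / 3) (y - 2 * π / 3) τ := by
  refine tsum_congr fun m => tsum_congr fun n => ?_
  rw [← exp_int_mul]
  simp only [← exp_add]
  congr 1
  push_cast
  ring

namespace Adag

def quadForm (p : ℤ × ℤ) : ℤ := p.1 ^ 2 + p.1 * p.2 + p.2 ^ 2

noncomputable def term (x y τ : ℂ) (p : ℤ × ℤ) : ℂ :=
  exp (2 * I * π * τ * quadForm p + 2 * I * (p.1 + p.2) * x + 2 * I * p.2 * y)

lemma term_eq_jacobiTheta₂_term_mul (x y τ : ℂ) (p : ℤ × ℤ) :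
    term x y τ p = jacobiTheta₂_term p.1 (x / π) τ * jacobiTheta₂_term p.2 ((x + y) / π) τ *
      jacobiTheta₂_term (p.1 + p.2) 0 τ := by
  simp only [term, jacobiTheta₂_term, quadForm, ← exp_add]
  congr 1
  push_cast
  field_simp
  ring

lemma summable_norm_term (x y : ℂ) {τ : ℂ} (hτ : 0 < τ.im) :
    Summable fun p : ℤ × ℤ => ‖term x y τ p‖ := by
  have hθ (z : ℂ) : Summable fun n : ℤ => ‖jacobiTheta₂_term n z τ‖ :=
    summable_norm_iff.mpr ((summable_jacobiTheta₂_term_iff z τ).mpr hτ)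
  refine .of_nonneg_of_le (fun _ => norm_nonneg _) (fun p => ?_)
    ((hθ (x / π)).mul_norm (hθ ((x + y) / π)))
  rw [term_eq_jacobiTheta₂_term_mul, norm_mul _ (jacobiTheta₂_term _ 0 τ)]
  refine mul_le_of_le_one_right (norm_nonneg _) ?_
  rw [norm_jacobiTheta₂_term, Real.exp_le_one_iff]
  simp only [zero_im, mul_zero, sub_zero, neg_mul, neg_nonpos]
  positivity

lemma eq_tsum_term (x y : ℂ) {τ : ℂ} (hτ : 0 < τ.im) : Adag x y τ = ∑' p, term x y τ p := by
  have hs := (summable_norm_term x y hτ).of_norm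
  rw [hs.tsum_prod' fun m => hs.comp_injective (Prod.mk_right_injective m)]
  refine tsum_congr fun m => tsum_congr fun n => ?_
  simp only [term, quadForm, exp_add]
  push_cast
  ring

abbrev Triple : Type := (ℤ × ℤ) × (ℤ × ℤ) × (ℤ × ℤ)

def mapTriple (f : ℤ × ℤ → ℤ × ℤ) (t : Triple) : Triple := (f t.1, f t.2.1, f t.2.2)

def fstSum (t : Triple) : ℤ := t.1.1 + t.2.1.1 + t.2.2.1

def sndSum (t : Triple) : ℤ := t.1.2 + t.2.1.2 + t.2.2.2

def quadSum (t : Triple) : ℤ := quadForm t.1 + quadForm t.2.1 + quadForm t.2.2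

/-- On triples with `s = Σ m - Σ n ≢ 0 (mod 3)` this applies to each point the rotation
`(m, n) ↦ (n, -m - n)` of the hexagonal lattice (its square when `s ≡ 2`), which preserves
`quadForm`, followed by a translation common to the three points. -/
def shift (t : Triple) : Triple :=
  if (fstSum t - sndSum t) % 3 = 0 then t
  else if (fstSum t - sndSum t) % 3 = 1 then
    let k := (fstSum t - sndSum t - 1) / 3
    mapTriple (fun p => (p.2 + k, sndSum t - p.1 - p.2 + k)) t
  else
    let k := (fstSum t - sndSum t - 2) / 3
    mapTriple (fun p => (sndSum t - p.1 - p.2 + 2 * k + 1, p.1 - k - 1)) t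

def unshift (t : Triple) : Triple :=
  if (fstSum t - sndSum t) % 3 = 0 then t
  else if (fstSum t - sndSum t) % 3 = 1 then
    let k := (fstSum t - sndSum t - 1) / 3
    mapTriple (fun p => (sndSum t - p.1 - p.2 + 2 * k + 1, p.1 - k)) t
  else
    let k := (fstSum t - sndSum t - 2) / 3
    mapTriple (fun p => (p.2 + k + 1, sndSum t - p.1 - p.2 + k + 1)) t

section

variable {t : Triple}

lemma shift_of_emod_eq_zero (h : (fstSum t - sndSum t) % 3 = 0) : shift t = t := if_pos h

lemma shift_of_emod_eq_one (h : (fstSum t - sndSum t) % 3 = 1) :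
    shift t = mapTriple (fun p => (p.2 + (fstSum t - sndSum t - 1) / 3,
      sndSum t - p.1 - p.2 + (fstSum t - sndSum t - 1) / 3)) t := by
  rw [shift, if_neg (by omega), if_pos h]

lemma shift_of_emod_eq_two (h : (fstSum t - sndSum t) % 3 = 2) :
    shift t = mapTriple (fun p => (sndSum t - p.1 - p.2 + 2 * ((fstSum t - sndSum t - 2) / 3) + 1,
      p.1 - (fstSum t - sndSum t - 2) / 3 - 1)) t := by
  rw [shift, if_neg (by omega), if_neg (by omega)]

lemma unshift_of_emod_eq_zero (h : (fstSum t - sndSum t) % 3 = 0) : unshift t = t := if_pos h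

lemma unshift_of_emod_eq_one (h : (fstSum t - sndSum t) % 3 = 1) :
    unshift t = mapTriple (fun p => (sndSum t - p.1 - p.2 + 2 * ((fstSum t - sndSum t - 1) / 3) + 1,
      p.1 - (fstSum t - sndSum t - 1) / 3)) t := by
  rw [unshift, if_neg (by omega), if_pos h]

lemma unshift_of_emod_eq_two (h : (fstSum t - sndSum t) % 3 = 2) :
    unshift t = mapTriple (fun p => (p.2 + (fstSum t - sndSum t - 2) / 3 + 1,
      sndSum t - p.1 - p.2 + (fstSum t - sndSum t - 2) / 3 + 1)) t := by
  rw [unshift, if_neg (by omega), if_neg (by omega)]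

lemma fstSum_shift (h : (fstSum t - sndSum t) % 3 ≠ 0) : fstSum (shift t) = fstSum t - 1 := by
  rcases (by omega : (fstSum t - sndSum t) % 3 = 1 ∨ (fstSum t - sndSum t) % 3 = 2) with h | h
  · rw [shift_of_emod_eq_one h]
    obtain ⟨⟨m₁, n₁⟩, ⟨m₂, n₂⟩, ⟨m₃, n₃⟩⟩ := t
    simp only [mapTriple, fstSum, sndSum] at h ⊢
    omega
  · rw [shift_of_emod_eq_two h]
    obtain ⟨⟨m₁, n₁⟩, ⟨m₂, n₂⟩, ⟨m₃, n₃⟩⟩ := t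
    simp only [mapTriple, fstSum, sndSum] at h ⊢
    omega

lemma sndSum_shift (h : (fstSum t - sndSum t) % 3 ≠ 0) : sndSum (shift t) = sndSum t - 1 := by
  rcases (by omega : (fstSum t - sndSum t) % 3 = 1 ∨ (fstSum t - sndSum t) % 3 = 2) with h | h
  · rw [shift_of_emod_eq_one h]
    obtain ⟨⟨m₁, n₁⟩, ⟨m₂, n₂⟩, ⟨m₃, n₃⟩⟩ := t
    simp only [mapTriple, fstSum, sndSum] at h ⊢
    omega
  · rw [shift_of_emod_eq_two h]
    obtain ⟨⟨m₁, n₁⟩, ⟨m₂, n₂⟩, ⟨m₃, n₃⟩⟩ := t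
    simp only [mapTriple, fstSum, sndSum] at h ⊢
    omega

lemma quadSum_shift (h : (fstSum t - sndSum t) % 3 ≠ 0) :
    quadSum (shift t) = quadSum t - fstSum t - sndSum t + 1 := by
  rcases (by omega : (fstSum t - sndSum t) % 3 = 1 ∨ (fstSum t - sndSum t) % 3 = 2) with h | h
  · rw [shift_of_emod_eq_one h]
    obtain ⟨⟨m₁, n₁⟩, ⟨m₂, n₂⟩, ⟨m₃, n₃⟩⟩ := t
    simp only [mapTriple, fstSum, sndSum, quadSum, quadForm] at h ⊢
    generalize hk : (m₁ + m₂ + m₃ - (n₁ + n₂ + n₃) - 1) / 3 = k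
    obtain rfl : m₃ = n₁ + n₂ + n₃ + 3 * k + 1 - m₁ - m₂ := by omega
    ring
  · rw [shift_of_emod_eq_two h]
    obtain ⟨⟨m₁, n₁⟩, ⟨m₂, n₂⟩, ⟨m₃, n₃⟩⟩ := t
    simp only [mapTriple, fstSum, sndSum, quadSum, quadForm] at h ⊢
    generalize hk : (m₁ + m₂ + m₃ - (n₁ + n₂ + n₃) - 2) / 3 = k
    obtain rfl : m₃ = n₁ + n₂ + n₃ + 3 * k + 2 - m₁ - m₂ := by omega
    ring

end

lemma unshift_shift : Function.LeftInverse unshift shift := by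
  intro t
  rcases (by omega : (fstSum t - sndSum t) % 3 = 0 ∨ (fstSum t - sndSum t) % 3 = 1 ∨
    (fstSum t - sndSum t) % 3 = 2) with h | h | h
  · rw [shift_of_emod_eq_zero h, unshift_of_emod_eq_zero h]
  · rw [shift_of_emod_eq_one h, unshift_of_emod_eq_one]
    all_goals
      obtain ⟨⟨m₁, n₁⟩, ⟨m₂, n₂⟩, ⟨m₃, n₃⟩⟩ := t
      simp only [mapTriple, fstSum, sndSum, Prod.mk.injEq] at h ⊢
      omega
  · rw [shift_of_emod_eq_two h, unshift_of_emod_eq_two]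
    all_goals
      obtain ⟨⟨m₁, n₁⟩, ⟨m₂, n₂⟩, ⟨m₃, n₃⟩⟩ := t
      simp only [mapTriple, fstSum, sndSum, Prod.mk.injEq] at h ⊢
      omega

lemma shift_unshift : Function.RightInverse unshift shift := by
  intro t
  rcases (by omega : (fstSum t - sndSum t) % 3 = 0 ∨ (fstSum t - sndSum t) % 3 = 1 ∨
    (fstSum t - sndSum t) % 3 = 2) with h | h | h
  · rw [unshift_of_emod_eq_zero h, shift_of_emod_eq_zero h]
  · rw [unshift_of_emod_eq_one h, shift_of_emod_eq_one]
    all_goals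
      obtain ⟨⟨m₁, n₁⟩, ⟨m₂, n₂⟩, ⟨m₃, n₃⟩⟩ := t
      simp only [mapTriple, fstSum, sndSum, Prod.mk.injEq] at h ⊢
      omega
  · rw [unshift_of_emod_eq_two h, shift_of_emod_eq_two]
    all_goals
      obtain ⟨⟨m₁, n₁⟩, ⟨m₂, n₂⟩, ⟨m₃, n₃⟩⟩ := t
      simp only [mapTriple, fstSum, sndSum, Prod.mk.injEq] at h ⊢
      omega

def shiftEquiv : Triple ≃ Triple := ⟨shift, unshift, unshift_shift, shift_unshift⟩

noncomputable def tripleTerm (x y τ : ℂ) (t : Triple) : ℂ :=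
  exp (2 * I * π * τ * quadSum t + 2 * I * (fstSum t + sndSum t) * x + 2 * I * sndSum t * y)

lemma term_mul_term_mul_term (x y τ : ℂ) (t : Triple) :
    term x y τ t.1 * (term x y τ t.2.1 * term x y τ t.2.2) = tripleTerm x y τ t := by
  simp only [term, tripleTerm, quadSum, fstSum, sndSum, ← exp_add]
  congr 1
  push_cast
  ring

lemma summable_tripleTerm (x y : ℂ) {τ : ℂ} (hτ : 0 < τ.im) : Summable (tripleTerm x y τ) :=
  ((summable_norm_term x y hτ).mul_mul_norm.of_norm).congr (term_mul_term_mul_term x y τ)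

lemma cube_eq_tsum_tripleTerm (x y : ℂ) {τ : ℂ} (hτ : 0 < τ.im) :
    Adag x y τ ^ 3 = ∑' t, tripleTerm x y τ t := by
  rw [eq_tsum_term x y hτ, tsum_pow_three_of_summable_norm (summable_norm_term x y hτ)]
  exact tsum_congr (term_mul_term_mul_term x y τ)

lemma tripleTerm_eq_mul_tripleTerm_shift (x y τ : ℂ) {t : Triple}
    (h : (fstSum t - sndSum t) % 3 ≠ 0) :
    tripleTerm x y τ t = exp (2 * I * π * τ) * exp (4 * I * x + 2 * I * y) *
      tripleTerm (x + π * τ) y τ (shift t) := by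
  rw [tripleTerm, tripleTerm, quadSum_shift h, fstSum_shift h, sndSum_shift h, ← exp_add,
    ← exp_add]
  congr 1
  push_cast
  ring

lemma tripleTerm_twist (x y τ : ℂ) {t : Triple} (h : (fstSum t - sndSum t) % 3 = 0) :
    tripleTerm (x + π / 3) (y - 2 * π / 3) τ t = tripleTerm x y τ t := by
  obtain ⟨j, hj⟩ : ∃ j, fstSum t - sndSum t = 3 * j := ⟨(fstSum t - sndSum t) / 3, by omega⟩
  have hj' : (fstSum t : ℂ) - sndSum t = 3 * j := by exact_mod_cast hj
  rw [tripleTerm, tripleTerm, ← mul_one (exp (_ + _ + 2 * I * sndSum t * y)),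
    ← exp_int_mul_two_pi_mul_I j, ← exp_add]
  congr 1
  linear_combination (2 * π * I / 3) * hj'

noncomputable def cubeDiffTerm (x y τ : ℂ) (t : Triple) : ℂ :=
  tripleTerm x y τ t - tripleTerm (x + π / 3) (y - 2 * π / 3) τ t

lemma cubeDiffTerm_eq_mul_cubeDiffTerm_shift (x y τ : ℂ) (t : Triple) :
    cubeDiffTerm x y τ t = exp (2 * I * π * τ) * exp (4 * I * x + 2 * I * y) *
      cubeDiffTerm (x + π * τ) y τ (shift t) := by
  by_cases h : (fstSum t - sndSum t) % 3 = 0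
  · rw [shift_of_emod_eq_zero h, cubeDiffTerm, cubeDiffTerm, tripleTerm_twist x y τ h,
      tripleTerm_twist _ y τ h, sub_self, sub_self, mul_zero]
  · have hfactor : exp (4 * I * (x + π / 3) + 2 * I * (y - 2 * π / 3)) =
        exp (4 * I * x + 2 * I * y) := by
      congr 1
      ring
    rw [cubeDiffTerm, cubeDiffTerm, tripleTerm_eq_mul_tripleTerm_shift x y τ h,
      tripleTerm_eq_mul_tripleTerm_shift _ _ τ h, hfactor, add_right_comm x]
    ring

lemma cube_sub_Cdag_cube_eq_tsum (x y : ℂ) {τ : ℂ} (hτ : 0 < τ.im) :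
    Adag x y τ ^ 3 - Cdag x y τ ^ 3 = ∑' t, cubeDiffTerm x y τ t := by
  rw [Cdag_eq_Adag, cube_eq_tsum_tripleTerm x y hτ, cube_eq_tsum_tripleTerm _ _ hτ,
    ← (summable_tripleTerm x y hτ).tsum_sub (summable_tripleTerm _ _ hτ)]
  rfl

end Adag

open Adag in
/-- Quasi-periodicity of `A†³ − C†³` in `x`. -/
theorem Adag_cube_minus_Cdag_cube (τ : ℂ) (hτ : 0 < τ.im) (x y : ℂ) :
    Adag x y τ ^ 3 - Cdag x y τ ^ 3
      = Complex.exp (2 * Complex.I * Real.pi * τ) *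
          Complex.exp (4 * Complex.I * x + 2 * Complex.I * y) *
          (Adag (x + Real.pi * τ) y τ ^ 3 - Cdag (x + Real.pi * τ) y τ ^ 3) := by
  rw [cube_sub_Cdag_cube_eq_tsum x y hτ, cube_sub_Cdag_cube_eq_tsum _ y hτ,
    ← shiftEquiv.tsum_eq (cubeDiffTerm (x + π * τ) y τ), ← tsum_mul_left]
  exact tsum_congr (cubeDiffTerm_eq_mul_cubeDiffTerm_shift x y τ)
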